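/- Let A be a symmetric positive-definite 3×3 real matrix with μ_A < 0 (elliptic flow), S := A⁻¹J(A−I), λ := √(−μ_A/det A) > 0, τ := 2π/λ, and m the associated symbol. Then for every k₀ ∈ ℝ³ \ {0} the symbol evaluated along the frequency trajectory has zero mean over one period: ∫₀^τ m(e^{−rSᵀ}k₀) dr = 0. -/

import Mathlib

/-!
Write `X = Sᵀ` and `k(r) = e^{-rX} k₀`. A direct computation gives `S³ = (μ_A / det A) S`,
so `X³ = -λ² X`, and Rodrigues' formula gives `e^{-τX} = 1`: the trajectory is `τ`-periodic.
Since `A⁻¹` is symmetric and `J` is skew, the positive quadratic form `q(r) = k(r) · A⁻¹ k(r)`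
satisfies `q' = -m(k) q`, so `m(k(r))` is the derivative of `-log q(r)`, whose integral over a
period vanishes.
-/

open Matrix MeasureTheory Real

/-- The Coriolis-type matrix `J`. -/
noncomputable def Jmat : Matrix (Fin 3) (Fin 3) ℝ := !![0, -1, 0; 1, 0, 0; 0, 0, 0]

/-- The matrix `S := A⁻¹ J (A − I)`. -/
noncomputable def Smat (A : Matrix (Fin 3) (Fin 3) ℝ) : Matrix (Fin 3) (Fin 3) ℝ :=
  A⁻¹ * Jmat * (A - 1)

/-- The symbol `m(x) = 2 (x · A⁻¹Jx)/(x · A⁻¹x)`. -/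
noncomputable def symb (A : Matrix (Fin 3) (Fin 3) ℝ) (x : Fin 3 → ℝ) : ℝ :=
  2 * (x ⬝ᵥ (A⁻¹ * Jmat) *ᵥ x) / (x ⬝ᵥ A⁻¹ *ᵥ x)

open scoped Nat

section Rodrigues

variable {𝔸 : Type*} [Ring 𝔸] [Algebra ℝ 𝔸] {M : 𝔸}

theorem pow_odd_of_pow_three_eq_neg (hM : M ^ 3 = -M) (k : ℕ) :
    M ^ (2 * k + 1) = (-1 : ℝ) ^ k • M := by
  induction k with
  | zero => simp
  | succ k ih =>
    rw [show 2 * (k + 1) + 1 = 2 * k + 1 + 2 by ring, pow_add, ih, smul_mul_assoc, ← pow_succ',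
      hM, pow_succ, mul_neg_one, neg_smul, smul_neg]

theorem pow_even_of_pow_three_eq_neg (hM : M ^ 3 = -M) (k : ℕ) :
    M ^ (2 * k + 2) = (-1 : ℝ) ^ k • M ^ 2 := by
  rw [pow_succ, pow_odd_of_pow_three_eq_neg hM, smul_mul_assoc, sq]

variable [TopologicalSpace 𝔸] [IsTopologicalRing 𝔸] [ContinuousSMul ℝ 𝔸] [T2Space 𝔸]

/-- Rodrigues' formula. -/
theorem exp_smul_of_pow_three_eq_neg (hM : M ^ 3 = -M) (t : ℝ) :
    NormedSpace.exp (t • M) = 1 + Real.sin t • M + (1 - Real.cos t) • M ^ 2 := by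
  rw [NormedSpace.exp_eq_tsum ℝ, add_right_comm]
  refine HasSum.tsum_eq (HasSum.even_add_odd ?_ ?_)
  · have hcos : HasSum (fun k : ℕ => -((-1 : ℝ) ^ (k + 1) * t ^ (2 * (k + 1)) / (2 * (k + 1))!))
        (1 - Real.cos t) := by
      simpa using ((hasSum_nat_add_iff' 1).2 (Real.hasSum_cos t)).neg
    simpa using HasSum.zero_add (f := fun k : ℕ => ((2 * k)! : ℝ)⁻¹ • (t • M) ^ (2 * k)) <| by
      convert hcos.smul_const (M ^ 2) using 2 with k
      rw [smul_pow, mul_add, mul_one, pow_even_of_pow_three_eq_neg hM, smul_smul, smul_smul]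
      congr 1
      field_simp
      ring
  · convert (Real.hasSum_sin t).smul_const M using 2 with k
    rw [smul_pow, pow_odd_of_pow_three_eq_neg hM, smul_smul, smul_smul]
    congr 1
    field_simp

end Rodrigues

theorem exp_smul_two_pi_div_eq_one {𝔸 : Type*} [Ring 𝔸] [Algebra ℝ 𝔸] [TopologicalSpace 𝔸]
    [IsTopologicalRing 𝔸] [ContinuousSMul ℝ 𝔸] [T2Space 𝔸] {M : 𝔸} {ω : ℝ}
    (hM : M ^ 3 = -(ω ^ 2) • M) (hω : ω ≠ 0) :
    NormedSpace.exp ((2 * π / ω) • M) = 1 := by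
  have hN : (ω⁻¹ • M) ^ 3 = -(ω⁻¹ • M) := by
    rw [smul_pow, hM, smul_smul, ← neg_smul]
    congr 1
    field_simp
  rw [div_eq_mul_inv, ← smul_smul, exp_smul_of_pow_three_eq_neg hN]
  simp

section Flow

variable {n : Type*} [Fintype n]

theorem HasDerivAt.dotProduct {f g : ℝ → n → ℝ} {f' g' : n → ℝ} {r : ℝ}
    (hf : HasDerivAt f f' r) (hg : HasDerivAt g g' r) :
    HasDerivAt (fun u => f u ⬝ᵥ g u) (f' ⬝ᵥ g r + f r ⬝ᵥ g') r := by
  simp only [_root_.dotProduct, ← Finset.sum_add_distrib]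
  exact HasDerivAt.fun_sum fun i _ => (hasDerivAt_pi.1 hf i).mul (hasDerivAt_pi.1 hg i)

theorem HasDerivAt.const_mulVec (B : Matrix n n ℝ) {f : ℝ → n → ℝ} {f' : n → ℝ} {r : ℝ}
    (hf : HasDerivAt f f' r) : HasDerivAt (fun u => B *ᵥ f u) (B *ᵥ f') r :=
  (mulVecLin B).toContinuousLinearMap.hasFDerivAt.comp_hasDerivAt r hf

variable [DecidableEq n]

theorem hasDerivAt_exp_neg_smul_mulVec (X : Matrix n n ℝ) (v : n → ℝ) (r : ℝ) :
    HasDerivAt (fun u : ℝ => NormedSpace.exp ((-u) • X) *ᵥ v)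
      (-(X *ᵥ (NormedSpace.exp ((-r) • X) *ᵥ v))) r := by
  -- any algebra norm on matrices induces their topology; the statement does not mention one
  let : NormedRing (Matrix n n ℝ) := Matrix.linftyOpNormedRing
  let : NormedAlgebra ℝ (Matrix n n ℝ) := Matrix.linftyOpNormedAlgebra
  have hexp := (hasDerivAt_exp_smul_const' (𝕂 := ℝ) X (-r)).scomp r (hasDerivAt_neg r)
  refine (((mulVecBilin ℝ ℝ).flip v).toContinuousLinearMap.hasFDerivAt.comp_hasDerivAt r
    hexp).congr_deriv ?_
  rw [neg_one_smul, mulVec_mulVec, ← neg_mulVec]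
  rfl

/-- Along solutions of `x' = -X x` this is `-(d/dt) log (x ⬝ᵥ B *ᵥ x)`. -/
noncomputable def quadDecayRate (B X : Matrix n n ℝ) (x : n → ℝ) : ℝ :=
  (x ⬝ᵥ (Xᵀ * B + B * X) *ᵥ x) / (x ⬝ᵥ B *ᵥ x)

variable {B X : Matrix n n ℝ} {k₀ : n → ℝ}

theorem dotProduct_mulVec_exp_mulVec_pos (hB : B.PosDef) (hk₀ : k₀ ≠ 0) (M : Matrix n n ℝ) :
    0 < (NormedSpace.exp M *ᵥ k₀) ⬝ᵥ B *ᵥ (NormedSpace.exp M *ᵥ k₀) := by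
  have hk : NormedSpace.exp M *ᵥ k₀ ≠ 0 :=
    (mulVec_injective_iff_isUnit.2 (Matrix.isUnit_exp M)).ne_iff' (mulVec_zero _) |>.2 hk₀
  simpa using hB.dotProduct_mulVec_pos hk

theorem hasDerivAt_neg_log_quadForm_exp_mulVec (hB : B.PosDef) (hk₀ : k₀ ≠ 0) (r : ℝ) :
    HasDerivAt (fun u => -Real.log ((NormedSpace.exp ((-u) • X) *ᵥ k₀) ⬝ᵥ
        B *ᵥ (NormedSpace.exp ((-u) • X) *ᵥ k₀)))
      (quadDecayRate B X (NormedSpace.exp ((-r) • X) *ᵥ k₀)) r := by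
  have hflow := hasDerivAt_exp_neg_smul_mulVec X k₀ r
  have hq := (hflow.dotProduct (hflow.const_mulVec B)).log
    (dotProduct_mulVec_exp_mulVec_pos hB hk₀ _).ne'
  refine hq.neg.congr_deriv ?_
  generalize NormedSpace.exp ((-r) • X) *ᵥ k₀ = k
  rw [quadDecayRate, add_mulVec, dotProduct_add, ← mulVec_mulVec, ← mulVec_mulVec,
    dotProduct_transpose_mulVec, dotProduct_comm (B *ᵥ k), mulVec_neg, neg_dotProduct,
    dotProduct_neg]
  ring

theorem integral_quadDecayRate_exp_mulVec_eq_zero (hB : B.PosDef) {τ : ℝ}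
    (hτ : NormedSpace.exp ((-τ) • X) = 1) (hk₀ : k₀ ≠ 0) :
    ∫ r in (0 : ℝ)..τ, quadDecayRate B X (NormedSpace.exp ((-r) • X) *ᵥ k₀) = 0 := by
  have hflow : Continuous fun r : ℝ => NormedSpace.exp ((-r) • X) *ᵥ k₀ :=
    continuous_iff_continuousAt.2 fun r => (hasDerivAt_exp_neg_smul_mulVec X k₀ r).continuousAt
  have hcont : Continuous fun r : ℝ => quadDecayRate B X (NormedSpace.exp ((-r) • X) *ᵥ k₀) :=
    (hflow.dotProduct (continuous_const.matrix_mulVec hflow)).div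
      (hflow.dotProduct (continuous_const.matrix_mulVec hflow))
      fun _ => (dotProduct_mulVec_exp_mulVec_pos hB hk₀ _).ne'
  rw [intervalIntegral.integral_eq_sub_of_hasDerivAt
    (fun r _ => hasDerivAt_neg_log_quadForm_exp_mulVec hB hk₀ r) (hcont.intervalIntegrable _ _),
    hτ]
  simp

end Flow

section Symbol

theorem Jmat_transpose : Jmatᵀ = -Jmat := by
  ext i j
  fin_cases i <;> fin_cases j <;> simp [Jmat]

theorem inv_mul_mul_sub_one_mul_inv_add {R n : Type*} [CommRing R] [Fintype n] [DecidableEq n]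
    {A J : Matrix n n R} (hA : Aᵀ = A) (hJ : Jᵀ = -J) (hdet : IsUnit A.det) :
    A⁻¹ * J * (A - 1) * A⁻¹ + A⁻¹ * (A⁻¹ * J * (A - 1))ᵀ = A⁻¹ * J - J * A⁻¹ := by
  have hAB : A * A⁻¹ = 1 := mul_nonsing_inv A hdet
  have hBA : A⁻¹ * A = 1 := nonsing_inv_mul A hdet
  rw [transpose_mul, transpose_mul, transpose_nonsing_inv, hA, hJ, transpose_sub, transpose_one,
    hA]
  simp only [Matrix.mul_sub, Matrix.sub_mul, mul_assoc, hAB, hBA, Matrix.mul_one, Matrix.one_mul,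
    Matrix.mul_neg, Matrix.neg_mul, ← mul_assoc A⁻¹ A]
  abel

variable {A : Matrix (Fin 3) (Fin 3) ℝ}

theorem symb_eq_quadDecayRate (hA : Aᵀ = A) (hdet : IsUnit A.det) (x : Fin 3 → ℝ) :
    symb A x = quadDecayRate A⁻¹ (Smat A)ᵀ x := by
  have hskew : x ⬝ᵥ (Jmat * A⁻¹) *ᵥ x = -(x ⬝ᵥ (A⁻¹ * Jmat) *ᵥ x) := by
    rw [← dotProduct_transpose_mulVec, transpose_mul, Jmat_transpose, transpose_nonsing_inv, hA,
      Matrix.mul_neg, neg_mulVec, dotProduct_neg]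
  rw [symb, quadDecayRate, transpose_transpose, Smat,
    inv_mul_mul_sub_one_mul_inv_add hA Jmat_transpose hdet, sub_mulVec, dotProduct_sub, hskew]
  ring

theorem adjugate_mul_Jmat_mul_sub_one_pow_three {a b c d e f : ℝ}
    (hA : A = !![a, b, c; b, d, e; c, e, f]) :
    (A.adjugate * Jmat * (A - 1)) ^ 3 =
      ((a * f - c ^ 2 + d * f - e ^ 2 - f - A.det) * A.det) • (A.adjugate * Jmat * (A - 1)) := by
  have hsub : A - 1 = !![a - 1, b, c; b, d - 1, e; c, e, f - 1] := by
    rw [hA, one_fin_three]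
    ext i j
    fin_cases i <;> fin_cases j <;> simp
  have hdet : A.det = a * d * f - a * e * e - b * b * f + b * e * c + c * b * e - c * d * c := by
    simp [hA, det_fin_three]
  rw [hsub, hdet, hA, adjugate_fin_three_of, Jmat, pow_three, mul_fin_three, mul_fin_three,
    mul_fin_three, mul_fin_three]
  ext i j
  fin_cases i <;> fin_cases j <;> simp <;> ring

theorem Smat_pow_three {a b c d e f : ℝ} (hA : A = !![a, b, c; b, d, e; c, e, f])
    (hdet : A.det ≠ 0) :
    Smat A ^ 3 = ((a * f - c ^ 2 + d * f - e ^ 2 - f - A.det) / A.det) • Smat A := by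
  have hS : Smat A = A.det⁻¹ • (A.adjugate * Jmat * (A - 1)) := by
    rw [Smat, inv_def, Ring.inverse_eq_inv', smul_mul_assoc, smul_mul_assoc]
  rw [hS, smul_pow, adjugate_mul_Jmat_mul_sub_one_pow_three hA, smul_smul, smul_smul]
  congr 1
  field_simp

end Symbol

/-- in the elliptic case `μ_A < 0`, with `λ := √(−μ_A/det A)` and
`τ := 2π/λ`, the symbol has zero mean along any frequency trajectory over one period:
`∫₀^τ m(e^{−rSᵀ}k₀) dr = 0` for every `k₀ ≠ 0`. -/
theorem elliptic_zero_mean (a b c d e f : ℝ) (A : Matrix (Fin 3) (Fin 3) ℝ)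
    (hA : A = !![a, b, c; b, d, e; c, e, f]) (hApd : A.PosDef)
    (μ : ℝ) (hμ : μ = a * f - c ^ 2 + d * f - e ^ 2 - f - A.det) (hμneg : μ < 0)
    (lam τ : ℝ) (hlam : lam = Real.sqrt (-μ / A.det)) (hτ : τ = 2 * π / lam) :
    ∀ k₀ : Fin 3 → ℝ, k₀ ≠ 0 →
      ∫ r in (0:ℝ)..τ, symb A (NormedSpace.exp ((-r) • (Smat A)ᵀ) *ᵥ k₀) = 0 := by
  intro k₀ hk₀
  have hdet : 0 < A.det := hApd.det_pos
  have hratio : 0 < -μ / A.det := div_pos (neg_pos.2 hμneg) hdet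
  have hlam_ne : lam ≠ 0 := hlam ▸ (Real.sqrt_pos.2 hratio).ne'
  have hcube : (Smat A)ᵀ ^ 3 = -((-lam) ^ 2) • (Smat A)ᵀ := by
    rw [← transpose_pow, Smat_pow_three hA hdet.ne', ← hμ, transpose_smul, neg_sq, hlam,
      Real.sq_sqrt hratio.le, neg_div, neg_neg]
  have hperiod : NormedSpace.exp ((-τ) • (Smat A)ᵀ) = 1 := by
    rw [hτ, ← div_neg]
    exact exp_smul_two_pi_div_eq_one hcube (neg_ne_zero.2 hlam_ne)
  have hAT : Aᵀ = A := by simpa using hApd.isHermitian.eq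
  simp_rw [symb_eq_quadDecayRate hAT (isUnit_iff_ne_zero.2 hdet.ne')]
  exact integral_quadDecayRate_exp_mulVec_eq_zero hApd.inv hperiod hk₀
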